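/- arXiv:1406.0650 — 10 statements merged into one kernel-verified Lean document; each statement's English description precedes it below -/
import Mathlib

section
/- Let Δ be a subset of H = {0,…,N_1-1} × ⋯ × {0,…,N_m-1} with each N_i dividing q-1, and let E_Δ ⊆ F_q^n (n = N_1⋯N_m) be the linear code spanned by the evaluations of monomials X^α with α ∈ Δ at all points of ⟨ξ_1⟩ × ⋯ × ⟨ξ_m⟩. Define Δ^⊥ = H \ { -α : α ∈ Δ } (negation taken componentwise modulo N_i). Then dim E_Δ = |Δ| and the Euclidean dual code of E_Δ equals E_{Δ^⊥}. -/
/-!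
With `ψᵢ a = ξᵢ ^ a.val`, an additive character of `ZMod Nᵢ`, the codeword of `X^α` has
coordinate `∏ ψᵢ (jᵢ αᵢ)` at `j`, so orthogonality of characters gives
`⟨ev α, ev β⟩ = (∏ Nᵢ) · [α + β = 0]`, where `∏ Nᵢ ≠ 0` because `F` contains primitive
`Nᵢ`-th roots of unity. Pairing with `ev (-α)` therefore reads off the coordinate at `α` in the
family of all monomial codewords: this family is a basis, which gives the dimension, and `v` is
orthogonal to `E_Δ` iff its coordinates vanish on `-Δ`, i.e. iff `v ∈ E_{Δ^⊥}`.
-/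

open Finset Matrix

section Characters

variable {M : Type*} [CommMonoid M] {m : ℕ} (N : Fin m → ℕ) [∀ i, NeZero (N i)] (ξ : Fin m → M)

/-- The point `(ξ i ^ j i)ᵢ` is indexed by its exponent vector `j`. -/
def evalMonomial (α : ∀ i, ZMod (N i)) : (∀ i, ZMod (N i)) → M :=
  fun j => ∏ i, ξ i ^ ((j i).val * (α i).val)

variable {N ξ}

lemma pow_val_mul_val_eq_zmodChar {n : ℕ} [NeZero n] {ζ : M} (hζ : ζ ^ n = 1) (a b : ZMod n) :
    ζ ^ (a.val * b.val) = AddChar.zmodChar n hζ (a * b) := by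
  rw [← AddChar.zmodChar_apply' hζ]
  push_cast
  simp only [ZMod.natCast_val, ZMod.cast_id', id]

lemma evalMonomial_mul_evalMonomial_apply (hξ : ∀ i, ξ i ^ N i = 1) (α β j : ∀ i, ZMod (N i)) :
    evalMonomial N ξ α j * evalMonomial N ξ β j =
      ∏ i, AddChar.zmodChar (N i) (hξ i) (j i * (α i + β i)) := by
  rw [evalMonomial, evalMonomial, ← prod_mul_distrib]
  refine prod_congr rfl fun i _ => ?_
  rw [pow_val_mul_val_eq_zmodChar (hξ i), pow_val_mul_val_eq_zmodChar (hξ i), mul_add,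
    AddChar.map_add_eq_mul]

end Characters

section Orthogonality

variable {R : Type*} [CommRing R] [IsDomain R] {m : ℕ} {N : Fin m → ℕ} [∀ i, NeZero (N i)]
  {ξ : Fin m → R}

lemma evalMonomial_dotProduct_evalMonomial (hξ : ∀ i, IsPrimitiveRoot (ξ i) (N i))
    (α β : ∀ i, ZMod (N i)) :
    evalMonomial N ξ α ⬝ᵥ evalMonomial N ξ β = if α + β = 0 then ∏ i, (N i : R) else 0 := by
  calc evalMonomial N ξ α ⬝ᵥ evalMonomial N ξ β
      = ∑ j : ∀ i, ZMod (N i), ∏ i,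
          AddChar.zmodChar (N i) (hξ i).pow_eq_one (j i * (α i + β i)) :=
        sum_congr rfl fun j _ => evalMonomial_mul_evalMonomial_apply _ α β j
    _ = ∏ i, ∑ x : ZMod (N i), AddChar.zmodChar (N i) (hξ i).pow_eq_one (x * (α i + β i)) := by
        rw [Fintype.prod_sum]
    _ = ∏ i, if α i + β i = 0 then (N i : R) else 0 := by
        refine prod_congr rfl fun i _ => ?_
        rw [AddChar.sum_mulShift _ (AddChar.zmodChar_primitive_of_primitive_root _ (hξ i)),
          ZMod.card, Nat.cast_ite, Nat.cast_zero]
    _ = if α + β = 0 then ∏ i, (N i : R) else 0 := by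
        rw [Fintype.prod_ite_zero]
        congr 1
        exact propext funext_iff.symm

lemma prod_natCast_ne_zero_of_isPrimitiveRoot (hξ : ∀ i, IsPrimitiveRoot (ξ i) (N i)) :
    ∏ i, (N i : R) ≠ 0 :=
  prod_ne_zero_iff.2 fun i _ => (hξ i).neZero'.out

lemma evalMonomial_dotProduct_sum_smul (hξ : ∀ i, IsPrimitiveRoot (ξ i) (N i))
    (r : (∀ i, ZMod (N i)) → R) (α : ∀ i, ZMod (N i)) :
    evalMonomial N ξ α ⬝ᵥ ∑ β, r β • evalMonomial N ξ β = (∏ i, (N i : R)) * r (-α) := by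
  simp only [dotProduct_sum, dotProduct_smul, evalMonomial_dotProduct_evalMonomial hξ,
    smul_eq_mul, mul_ite, mul_zero, add_eq_zero_iff_neg_eq, sum_ite_eq, mem_univ, if_true]
  ring

lemma linearIndependent_evalMonomial (hξ : ∀ i, IsPrimitiveRoot (ξ i) (N i)) :
    LinearIndependent R (evalMonomial N ξ) := by
  refine Fintype.linearIndependent_iff.2 fun r hr α => ?_
  have h := evalMonomial_dotProduct_sum_smul hξ r (-α)
  rw [hr, dotProduct_zero, neg_neg] at h
  exact (mul_eq_zero.1 h.symm).resolve_left (prod_natCast_ne_zero_of_isPrimitiveRoot hξ)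

end Orthogonality

section Duality

variable {F : Type*} [Field F] {m : ℕ} {N : Fin m → ℕ} [∀ i, NeZero (N i)] {ξ : Fin m → F}

noncomputable def monomialBasis (hξ : ∀ i, IsPrimitiveRoot (ξ i) (N i)) :
    Module.Basis (∀ i, ZMod (N i)) F ((∀ i, ZMod (N i)) → F) :=
  basisOfLinearIndependentOfCardEqFinrank (linearIndependent_evalMonomial hξ)
    (Module.finrank_fintype_fun_eq_card F).symm

lemma coe_monomialBasis (hξ : ∀ i, IsPrimitiveRoot (ξ i) (N i)) :
    ⇑(monomialBasis hξ) = evalMonomial N ξ :=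
  coe_basisOfLinearIndependentOfCardEqFinrank _ _

lemma evalMonomial_dotProduct_eq_mul_repr (hξ : ∀ i, IsPrimitiveRoot (ξ i) (N i))
    (v : (∀ i, ZMod (N i)) → F) (α : ∀ i, ZMod (N i)) :
    evalMonomial N ξ α ⬝ᵥ v = (∏ i, (N i : F)) * (monomialBasis hξ).repr v (-α) := by
  conv_lhs => rw [← (monomialBasis hξ).sum_repr v, coe_monomialBasis]
  exact evalMonomial_dotProduct_sum_smul hξ _ α

lemma finrank_span_evalMonomial_image (hξ : ∀ i, IsPrimitiveRoot (ξ i) (N i))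
    (Δ : Set (∀ i, ZMod (N i))) :
    Module.finrank F (Submodule.span F (evalMonomial N ξ '' Δ)) = Nat.card Δ := by
  have : Fintype Δ := Fintype.ofFinite Δ
  rw [Set.image_eq_range, Nat.card_eq_fintype_card]
  exact finrank_span_eq_card ((linearIndependent_evalMonomial hξ).comp _ Subtype.val_injective)

lemma forall_mem_span_evalMonomial_dotProduct_eq_zero_iff
    (hξ : ∀ i, IsPrimitiveRoot (ξ i) (N i)) (Δ : Set (∀ i, ZMod (N i)))
    (v : (∀ i, ZMod (N i)) → F) :
    (∀ c ∈ Submodule.span F (evalMonomial N ξ '' Δ), c ⬝ᵥ v = 0) ↔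
      v ∈ Submodule.span F (evalMonomial N ξ '' {β | -β ∉ Δ}) := by
  rw [← coe_monomialBasis hξ, Module.Basis.mem_span_image]
  calc (∀ c ∈ Submodule.span F (monomialBasis hξ '' Δ), c ⬝ᵥ v = 0)
      ↔ Submodule.span F (monomialBasis hξ '' Δ) ≤ LinearMap.ker ((dotProductBilin F F).flip v) :=
        Iff.rfl
    _ ↔ ∀ α ∈ Δ, evalMonomial N ξ α ⬝ᵥ v = 0 := by
        rw [Submodule.span_le, Set.image_subset_iff, coe_monomialBasis]
        rfl
    _ ↔ ∀ α ∈ Δ, (monomialBasis hξ).repr v (-α) = 0 := by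
        simp only [evalMonomial_dotProduct_eq_mul_repr hξ, mul_eq_zero,
          prod_natCast_ne_zero_of_isPrimitiveRoot hξ, false_or]
    _ ↔ ↑((monomialBasis hξ).repr v).support ⊆ {β | -β ∉ Δ} := by
        simp [Set.subset_def, not_imp_not]

end Duality

theorem stmt2_general {F : Type*} [Field F] {m : ℕ} (N : Fin m → ℕ)
    [∀ i, NeZero (N i)]
    (ξ : Fin m → F) (hξ : ∀ i, orderOf (ξ i) = N i)
    (Δ : Set (∀ i, ZMod (N i))) :
    Module.finrank F (Submodule.span F
        ((fun α : ∀ i, ZMod (N i) => fun j : ∀ i, ZMod (N i) =>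
          ∏ i, ξ i ^ ((j i).val * (α i).val)) '' Δ)) = Nat.card Δ ∧
    ∀ v : (∀ i, ZMod (N i)) → F,
      (∀ c ∈ Submodule.span F
          ((fun α : ∀ i, ZMod (N i) => fun j : ∀ i, ZMod (N i) =>
            ∏ i, ξ i ^ ((j i).val * (α i).val)) '' Δ), ∑ j, c j * v j = 0) ↔
      v ∈ Submodule.span F
          ((fun α : ∀ i, ZMod (N i) => fun j : ∀ i, ZMod (N i) =>
            ∏ i, ξ i ^ ((j i).val * (α i).val)) '' {β | -β ∉ Δ}) := by
  have hprim : ∀ i, IsPrimitiveRoot (ξ i) (N i) := fun i => hξ i ▸ IsPrimitiveRoot.orderOf (ξ i)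
  exact ⟨finrank_span_evalMonomial_image hprim Δ,
    forall_mem_span_evalMonomial_dotProduct_eq_zero_iff hprim Δ⟩

theorem stmt2 {F : Type*} [Field F] [Fintype F] {m : ℕ} (N : Fin m → ℕ)
    [∀ i, NeZero (N i)] (hdvd : ∀ i, N i ∣ Fintype.card F - 1)
    (ξ : Fin m → F) (hξ : ∀ i, orderOf (ξ i) = N i)
    (Δ : Set (∀ i, ZMod (N i))) (hΔ : Δ.Nonempty) :
    Module.finrank F (Submodule.span F
        ((fun α : ∀ i, ZMod (N i) => fun j : ∀ i, ZMod (N i) =>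
          ∏ i, ξ i ^ ((j i).val * (α i).val)) '' Δ)) = Nat.card Δ ∧
    ∀ v : (∀ i, ZMod (N i)) → F,
      (∀ c ∈ Submodule.span F
          ((fun α : ∀ i, ZMod (N i) => fun j : ∀ i, ZMod (N i) =>
            ∏ i, ξ i ^ ((j i).val * (α i).val)) '' Δ), ∑ j, c j * v j = 0) ↔
      v ∈ Submodule.span F
          ((fun α : ∀ i, ZMod (N i) => fun j : ∀ i, ZMod (N i) =>
            ∏ i, ξ i ^ ((j i).val * (α i).val)) '' {β | -β ∉ Δ}) :=
  stmt2_general N ξ hξ Δ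
end

section
/- Let C_1 ⊇ C_2 ⊇ ⋯ ⊇ C_s be a nested sequence of linear [m, k_i, d_i] codes over F_q and let A be an s × l full-rank matrix over F_q. Then the matrix-product code [C_1,…,C_s]·A, consisting of all vectors (Σ_i a_{i1} c_i, …, Σ_i a_{il} c_i) with c_i ∈ C_i, has length ml, dimension Σ_{i=1}^s k_i, and minimum distance at least min_{1≤i≤s} d_i δ_i, where δ_i is the minimum distance of the code in F_q^l generated by the first i rows of A. -/
/-- Hamming weight of a vector. -/
def hamWt {ι F : Type*} [Fintype ι] [Zero F] [DecidableEq F] (x : ι → F) : ℕ :=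
  (Finset.univ.filter fun j => x j ≠ 0).card

/-- `C` has minimum distance (weight) exactly `d`. -/
def minDistIs {ι F : Type*} [Fintype ι] [Zero F] [DecidableEq F]
    (C : Set (ι → F)) (d : ℕ) : Prop :=
  (∀ x ∈ C, x ≠ 0 → d ≤ hamWt x) ∧ ∃ x ∈ C, x ≠ 0 ∧ hamWt x = d

/-!
Write `c_i t` for the `t`-th entry of `c_i`. Column `t` of the codeword `(∑ i, a_{ij} c_i)_j` is
the vector `(c_i t)_i ᵥ* A`. If `i₀` is the last index with `c_{i₀} ≠ 0`, then for each of the at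
least `d_{i₀}` positions `t` with `c_{i₀} t ≠ 0` this column is a nonzero (the rows of `A` being
independent) combination of the first `i₀` rows, so it has weight at least `δ_{i₀}`. Summing
over columns gives weight at least `d_{i₀} δ_{i₀}`. Independence of the rows also makes the map
`(c_i) ↦ codeword` injective, which gives the dimension.
-/

open Finset Matrix

theorem Matrix.linearIndependent_row_of_rank_eq_card {R m n : Type*} [Field R] [Fintype m]
    [Fintype n] {A : Matrix m n R} (h : A.rank = Fintype.card m) : LinearIndependent R A.row := by
  rw [linearIndependent_iff_card_eq_finrank_span, Set.finrank, ← A.rank_eq_finrank_span_row, h]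

theorem hamWt_eq_sum_hamWt_column {κ n F : Type*} [Fintype κ] [Fintype n] [Zero F]
    [DecidableEq F] (x : κ × n → F) : hamWt x = ∑ t, hamWt fun j => x (j, t) := by
  simp only [hamWt, card_filter]
  exact Fintype.sum_prod_type_right _

theorem Function.exists_ne_zero_forall_lt_eq_zero {ι M : Type*} [Fintype ι] [LinearOrder ι]
    [Zero M] {c : ι → M} (hc : c ≠ 0) : ∃ i₀, c i₀ ≠ 0 ∧ ∀ i, i₀ < i → c i = 0 := by
  classical
  obtain ⟨i, hi⟩ := Function.ne_iff.mp hc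
  obtain ⟨i₀, hi₀, hmax⟩ := (univ.filter (c · ≠ 0)).exists_max_image id ⟨i, by simpa using hi⟩
  refine ⟨i₀, (mem_filter.mp hi₀).2, fun j hj => ?_⟩
  by_contra hcj
  exact (hmax j (by simpa using hcj)).not_gt hj

theorem Matrix.vecMul_mem_span_row_le {ι κ R : Type*} [Semiring R] [Fintype ι] [LinearOrder ι]
    (A : Matrix ι κ R) {v : ι → R} {i₀ : ι} (hv : ∀ i, i₀ < i → v i = 0) :
    v ᵥ* A ∈ Submodule.span R {r | ∃ i ≤ i₀, r = A i} := by
  rw [Matrix.vecMul_eq_sum]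
  refine Submodule.sum_mem _ fun i _ => ?_
  rcases le_or_gt i i₀ with hi | hi
  · exact Submodule.smul_mem _ _ (Submodule.subset_span ⟨i, hi, rfl⟩)
  · simp [hv i hi]

section MatrixProduct

variable {R ι κ n : Type*} [Fintype ι]

/-- Coordinate `(j, t)` of the image is position `t` of the `j`-th block. -/
def matrixProduct [CommSemiring R] (A : Matrix ι κ R) : (ι → n → R) →ₗ[R] (κ × n → R) where
  toFun c p := ∑ i, A i p.1 * c i p.2
  map_add' c c' := by
    funext p
    simp [mul_add, sum_add_distrib]
  map_smul' r c := by
    funext p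
    simp [mul_sum, mul_left_comm]

@[simp]
theorem matrixProduct_apply [CommSemiring R] (A : Matrix ι κ R) (c : ι → n → R) (p : κ × n) :
    matrixProduct A c p = ∑ i, A i p.1 * c i p.2 :=
  rfl

theorem matrixProduct_column [CommSemiring R] (A : Matrix ι κ R) (c : ι → n → R) (t : n) :
    (fun j => matrixProduct A c (j, t)) = (fun i => c i t) ᵥ* A := by
  funext j
  simp [vecMul, dotProduct, mul_comm]

theorem matrixProduct_injective [CommSemiring R] {A : Matrix ι κ R}
    (hA : LinearIndependent R A.row) : Function.Injective (matrixProduct (n := n) A) := by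
  intro c c' h
  funext i t
  have hcol := congrArg (fun x => fun j => x (j, t)) h
  simp only [matrixProduct_column] at hcol
  exact congrFun (vecMul_injective_iff.mpr hA hcol) i

def matrixProductCode [CommSemiring R] (A : Matrix ι κ R) (C : ι → Submodule R (n → R)) :
    Submodule R (κ × n → R) :=
  LinearMap.range (matrixProduct A ∘ₗ LinearMap.piMap fun i => (C i).subtype)

theorem mem_matrixProductCode [CommSemiring R] {A : Matrix ι κ R} {C : ι → Submodule R (n → R)}
    {x : κ × n → R} :
    x ∈ matrixProductCode A C ↔ ∃ c : ι → n → R, (∀ i, c i ∈ C i) ∧ matrixProduct A c = x := by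
  constructor
  · rintro ⟨c, rfl⟩
    exact ⟨fun i => c i, fun i => (c i).2, rfl⟩
  · rintro ⟨c, hc, rfl⟩
    exact ⟨fun i => ⟨c i, hc i⟩, rfl⟩

theorem coe_matrixProductCode [CommSemiring R] (A : Matrix ι κ R) (C : ι → Submodule R (n → R)) :
    (matrixProductCode A C : Set (κ × n → R)) =
      {x | ∃ c : ι → n → R, (∀ i, c i ∈ C i) ∧ ∀ p : κ × n, x p = ∑ i, A i p.1 * c i p.2} := by
  ext x
  simp only [SetLike.mem_coe, mem_matrixProductCode, Set.mem_ofPred_eq, funext_iff,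
    matrixProduct_apply, eq_comm]

theorem finrank_matrixProductCode [Field R] [Fintype n] {A : Matrix ι κ R}
    (hA : LinearIndependent R A.row) (C : ι → Submodule R (n → R)) :
    Module.finrank R (matrixProductCode A C) = ∑ i, Module.finrank R (C i) := by
  rw [matrixProductCode, LinearMap.finrank_range_of_inj, Module.finrank_pi_fintype]
  exact (matrixProduct_injective hA).comp
    (Function.Injective.piMap fun i => (C i).injective_subtype)

variable [Fintype κ] [Fintype n] [LinearOrder ι] [CommSemiring R] [DecidableEq R]

theorem mul_le_hamWt_matrixProduct {A : Matrix ι κ R} (hA : LinearIndependent R A.row)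
    {c : ι → n → R} {i₀ : ι} (hc : ∀ i, i₀ < i → c i = 0) {δ : ℕ}
    (hδ : ∀ v ∈ Submodule.span R {r | ∃ i ≤ i₀, r = A i}, v ≠ 0 → δ ≤ hamWt v) :
    hamWt (c i₀) * δ ≤ hamWt (matrixProduct A c) := by
  have hcol : ∀ t, c i₀ t ≠ 0 → δ ≤ hamWt fun j => matrixProduct A c (j, t) := by
    intro t ht
    rw [matrixProduct_column]
    refine hδ _ (vecMul_mem_span_row_le A fun i hi => by simp [hc i hi]) fun h0 => ht ?_
    have := vecMul_injective_iff.mpr hA (h0.trans (zero_vecMul A).symm)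
    exact congrFun this i₀
  calc hamWt (c i₀) * δ = ∑ t ∈ univ.filter (c i₀ · ≠ 0), δ := by
        rw [sum_const, smul_eq_mul, hamWt]
    _ ≤ ∑ t ∈ univ.filter (c i₀ · ≠ 0), hamWt fun j => matrixProduct A c (j, t) :=
        sum_le_sum fun t ht => hcol t (mem_filter.mp ht).2
    _ ≤ ∑ t, hamWt fun j => matrixProduct A c (j, t) := sum_le_sum_of_subset (filter_subset _ _)
    _ = hamWt (matrixProduct A c) := (hamWt_eq_sum_hamWt_column _).symm

theorem exists_mul_le_hamWt_of_mem_matrixProductCode {A : Matrix ι κ R}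
    (hA : LinearIndependent R A.row) {C : ι → Submodule R (n → R)} {d δ : ι → ℕ}
    (hd : ∀ i, ∀ y ∈ C i, y ≠ 0 → d i ≤ hamWt y)
    (hδ : ∀ i, ∀ v ∈ Submodule.span R {r | ∃ i' ≤ i, r = A i'}, v ≠ 0 → δ i ≤ hamWt v)
    {x : κ × n → R} (hx : x ∈ matrixProductCode A C) (hx0 : x ≠ 0) :
    ∃ i, d i * δ i ≤ hamWt x := by
  obtain ⟨c, hcC, rfl⟩ := mem_matrixProductCode.mp hx
  have hc : c ≠ 0 := by
    rintro rfl
    exact hx0 (map_zero _)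
  obtain ⟨i₀, hi₀, hlast⟩ := Function.exists_ne_zero_forall_lt_eq_zero hc
  exact ⟨i₀, (Nat.mul_le_mul_right _ (hd i₀ _ (hcC i₀) hi₀)).trans
    (mul_le_hamWt_matrixProduct hA hlast (hδ i₀))⟩

end MatrixProduct

theorem stmt4_general {F : Type*} [Field F] [DecidableEq F] {s l m : ℕ}
    (C : Fin s → Submodule F (Fin m → F)) (k d δ : Fin s → ℕ)
    (hk : ∀ i, Module.finrank F (C i) = k i)
    (hd : ∀ i, minDistIs (C i : Set (Fin m → F)) (d i))
    (A : Matrix (Fin s) (Fin l) F) (hrank : A.rank = s)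
    (hδ : ∀ i : Fin s, minDistIs
      ((Submodule.span F {r : Fin l → F | ∃ i' : Fin s, i' ≤ i ∧ r = A i'}) :
        Set (Fin l → F)) (δ i)) :
    ∃ D : Submodule F (Fin l × Fin m → F),
      (D : Set (Fin l × Fin m → F)) =
        {x | ∃ c : Fin s → Fin m → F, (∀ i, c i ∈ C i) ∧
          ∀ jt : Fin l × Fin m, x jt = ∑ i, A i jt.1 * c i jt.2} ∧
      Module.finrank F D = ∑ i, k i ∧
      ∀ x ∈ D, x ≠ 0 → ∃ i, d i * δ i ≤ hamWt x := by
  have hA : LinearIndependent F A.row :=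
    linearIndependent_row_of_rank_eq_card (by rw [hrank, Fintype.card_fin])
  refine ⟨matrixProductCode A C, coe_matrixProductCode A C, ?_, fun x hx hx0 => ?_⟩
  · rw [finrank_matrixProductCode hA]
    exact sum_congr rfl fun i _ => hk i
  · exact exists_mul_le_hamWt_of_mem_matrixProductCode hA (fun i => (hd i).1) (fun i => (hδ i).1)
      hx hx0

theorem stmt4 {F : Type*} [Field F] [Fintype F] [DecidableEq F] {s l m : ℕ}
    (C : Fin s → Submodule F (Fin m → F)) (k d δ : Fin s → ℕ)
    (hnested : ∀ i j : Fin s, i ≤ j → C j ≤ C i)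
    (hk : ∀ i, Module.finrank F (C i) = k i)
    (hd : ∀ i, minDistIs (C i : Set (Fin m → F)) (d i))
    (A : Matrix (Fin s) (Fin l) F) (hrank : A.rank = s)
    (hδ : ∀ i : Fin s, minDistIs
      ((Submodule.span F {r : Fin l → F | ∃ i' : Fin s, i' ≤ i ∧ r = A i'}) :
        Set (Fin l → F)) (δ i)) :
    ∃ D : Submodule F (Fin l × Fin m → F),
      (D : Set (Fin l × Fin m → F)) =
        {x | ∃ c : Fin s → Fin m → F, (∀ i, c i ∈ C i) ∧
          ∀ jt : Fin l × Fin m, x jt = ∑ i, A i jt.1 * c i jt.2} ∧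
      Module.finrank F D = ∑ i, k i ∧
      ∀ x ∈ D, x ≠ 0 → ∃ i, d i * δ i ≤ hamWt x :=
  stmt4_general C k d δ hk hd A hrank hδ
end

section
/- Let C_1,…,C_s be linear codes of length m over F_q and A a non-singular s × s matrix over F_q. Then the Euclidean dual of the matrix-product code [C_1,…,C_s]·A equals the matrix-product code [C_1^⊥,…,C_s^⊥]·(A^{-1})^t. -/
/-- The matrix-product code `[C_1,…,C_s]·A`. -/
def mpc {F : Type*} [Field F] {s l m : ℕ}
    (C : Fin s → Set (Fin m → F)) (A : Matrix (Fin s) (Fin l) F) :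
    Set (Fin l × Fin m → F) :=
  {x | ∃ c : Fin s → Fin m → F, (∀ i, c i ∈ C i) ∧
    ∀ jt : Fin l × Fin m, x jt = ∑ i, A i jt.1 * c i jt.2}

/-- The Euclidean dual of a set of vectors. -/
def dualSet {F : Type*} [CommRing F] {ι : Type*} [Fintype ι] (S : Set (ι → F)) :
    Set (ι → F) :=
  {v | ∀ c ∈ S, ∑ j, c j * v j = 0}

lemma sum4_comm {α β γ δ : Type*} [Fintype α] [Fintype β] [Fintype γ] [Fintype δ]
    {M : Type*} [AddCommMonoid M] (f : α → β → γ → δ → M) :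
    ∑ a, ∑ b, ∑ c, ∑ d, f a b c d = ∑ c, ∑ d, ∑ a, ∑ b, f a b c d :=
  calc ∑ a, ∑ b, ∑ c, ∑ d, f a b c d
      = ∑ a, ∑ c, ∑ b, ∑ d, f a b c d :=
        Finset.sum_congr rfl (fun _ _ => Finset.sum_comm)
    _ = ∑ c, ∑ a, ∑ b, ∑ d, f a b c d := Finset.sum_comm
    _ = ∑ c, ∑ a, ∑ d, ∑ b, f a b c d :=
        Finset.sum_congr rfl (fun _ _ => Finset.sum_congr rfl (fun _ _ => Finset.sum_comm))
    _ = ∑ c, ∑ d, ∑ a, ∑ b, f a b c d :=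
        Finset.sum_congr rfl (fun _ _ => Finset.sum_comm)

theorem stmt5 {F : Type*} [Field F] {s m : ℕ}
    (C : Fin s → Submodule F (Fin m → F)) (A : Matrix (Fin s) (Fin s) F)
    (hA : IsUnit A.det) :
    dualSet (mpc (fun i => (C i : Set (Fin m → F))) A) =
      mpc (fun i => dualSet (C i : Set (Fin m → F))) A⁻¹.transpose := by
  have hInv : A⁻¹ * A = 1 := Matrix.nonsing_inv_mul A hA
  have hInv' : A * A⁻¹ = 1 := Matrix.mul_nonsing_inv A hA
  ext x
  constructor
  · intro h
    refine ⟨fun i t => ∑ j, A i j * x (j, t), ?_, ?_⟩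
    · intro i c hc
      -- apply h to the mpc element coming from c' = single i c
      set c' : Fin s → Fin m → F := fun k => if k = i then c else 0 with hc'
      have hmem : ∀ k, c' k ∈ (C k : Set (Fin m → F)) := by
        intro k
        by_cases hk : k = i
        · subst hk; simp only [c', if_pos rfl]; exact hc
        · simp only [c', if_neg hk]; exact (C k).zero_mem
      have hy := h (fun jt : Fin s × Fin m => ∑ k, A k jt.1 * c' k jt.2)
        ⟨c', hmem, fun jt => rfl⟩
      have hsimp : ∀ jt : Fin s × Fin m,
          (∑ k, A k jt.1 * c' k jt.2) = A i jt.1 * c jt.2 := by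
        intro jt
        rw [Finset.sum_eq_single i]
        · simp [c']
        · intro b _ hb; simp [c', hb]
        · simp
      simp only [hsimp, Fintype.sum_prod_type] at hy
      calc ∑ t, c t * ∑ j, A i j * x (j, t)
          = ∑ t, ∑ j, A i j * c t * x (j, t) := by
            apply Finset.sum_congr rfl; intro t _
            rw [Finset.mul_sum]
            apply Finset.sum_congr rfl; intro j _; ring
        _ = ∑ j, ∑ t, A i j * c t * x (j, t) := Finset.sum_comm
        _ = 0 := hy
    · intro jt
      obtain ⟨j, t⟩ := jt
      simp only [Matrix.transpose_apply]
      symm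
      calc (∑ i, A⁻¹ j i * ∑ k, A i k * x (k, t))
          = ∑ i, ∑ k, A⁻¹ j i * A i k * x (k, t) := by
            simp [Finset.mul_sum, mul_assoc]
        _ = ∑ k, (∑ i, A⁻¹ j i * A i k) * x (k, t) := by
            rw [Finset.sum_comm]; simp [Finset.sum_mul]
        _ = ∑ k, (1 : Matrix (Fin s) (Fin s) F) j k * x (k, t) := by
            apply Finset.sum_congr rfl; intro k _
            rw [← hInv]; simp [Matrix.mul_apply]
        _ = x (j, t) := by simp [Matrix.one_apply]
  · rintro ⟨d, hd, hx⟩ y ⟨c, hc, hy⟩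
    have key : ∀ k i, (∑ j, A k j * A⁻¹ j i) = if k = i then 1 else 0 := by
      intro k i
      have := congrArg (fun M => M k i) hInv'
      simpa [Matrix.mul_apply, Matrix.one_apply] using this
    calc ∑ jt : Fin s × Fin m, y jt * x jt
        = ∑ j, ∑ t, (∑ k, A k j * c k t) * (∑ i, A⁻¹ j i * d i t) := by
          rw [Fintype.sum_prod_type]
          apply Finset.sum_congr rfl; intro j _
          apply Finset.sum_congr rfl; intro t _
          rw [hy (j, t), hx (j, t)]
          simp [Matrix.transpose_apply]
      _ = ∑ j, ∑ t, ∑ k, ∑ i, (A k j * A⁻¹ j i) * (c k t * d i t) := by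
          apply Finset.sum_congr rfl; intro j _
          apply Finset.sum_congr rfl; intro t _
          rw [Finset.sum_mul]
          apply Finset.sum_congr rfl; intro k _
          rw [Finset.mul_sum]
          apply Finset.sum_congr rfl; intro i _; ring
      _ = ∑ k, ∑ i, ∑ j, ∑ t, (A k j * A⁻¹ j i) * (c k t * d i t) := sum4_comm _
      _ = ∑ k, ∑ i, (∑ j, A k j * A⁻¹ j i) * (∑ t, c k t * d i t) := by
          apply Finset.sum_congr rfl; intro k _
          apply Finset.sum_congr rfl; intro i _
          rw [Finset.sum_mul_sum]
      _ = 0 := by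
          apply Finset.sum_eq_zero; intro k _
          apply Finset.sum_eq_zero; intro i _
          by_cases hk : k = i
          · subst hk
            rw [hd k (c k) (hc k)]; ring
          · rw [key k i, if_neg hk, zero_mul]
end

section
/- Let C_1, C_2 be linear codes of length n over F_2 with C_1^⊥ ⊆ C_1 and C_2^⊥ ⊆ C_2, and let A be the 3×3 matrix over F_2 with rows (1,0,1), (1,1,0), (1,1,1). Then the matrix-product code [C_1, C_1, C_2]·A contains its Euclidean dual: ([C_1, C_1, C_2]·A)^⊥ ⊆ [C_1, C_1, C_2]·A. -/
/-!
Split `v : F^{l × m}` into blocks `v_j` of length `m`. Testing `v` against the words of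
`[C_1,…,C_s]·A` built from `C_i` alone shows that, if `v` is dual to the code, each block
`(A v)_i` is dual to `C_i`, hence lies in `C_i`. If `Aᵀ P A = 1` for a permutation matrix `P`
that only exchanges equal constituent codes, then `v = Aᵀ (P A v)` exhibits `v` as a word of
`[C_1,…,C_s]·A`. For the given `A` over `𝔽₂`, `P` swaps the first two rows.
-/

namespace MatrixProductCode

open Matrix

variable {F : Type*} [Field F] {s l m : ℕ} {C : Fin s → Set (Fin m → F)}
  {A : Matrix (Fin s) (Fin l) F}

theorem single_mem_mpc (hC : ∀ i, 0 ∈ C i) {i : Fin s} {c : Fin m → F} (hc : c ∈ C i) :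
    (fun jt : Fin l × Fin m => A i jt.1 * c jt.2) ∈ mpc C A := by
  refine ⟨Pi.single i c, fun k => ?_, fun jt => ?_⟩
  · rcases eq_or_ne k i with rfl | hk
    · simpa using hc
    · simpa [hk] using hC k
  · simp [Pi.single_apply, ite_apply, mul_ite]

theorem mulVec_mem_dualSet_of_mem_dualSet_mpc (hC : ∀ i, 0 ∈ C i)
    {v : Fin l × Fin m → F} (hv : v ∈ dualSet (mpc C A)) (i : Fin s) :
    (fun t => (A *ᵥ fun j => v (j, t)) i) ∈ dualSet (C i) := by
  intro c hc
  calc ∑ t, c t * (A *ᵥ fun j => v (j, t)) i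
      = ∑ jt : Fin l × Fin m, A i jt.1 * c jt.2 * v jt := by
        simp only [mulVec, dotProduct, Finset.mul_sum, Fintype.sum_prod_type]
        rw [Finset.sum_comm]
        exact Finset.sum_congr rfl fun _ _ => Finset.sum_congr rfl fun _ _ => by ring
    _ = 0 := hv _ (single_mem_mpc hC hc)

theorem dualSet_mpc_subset (σ : Equiv.Perm (Fin s)) (hσ : ∀ i, C (σ i) = C i)
    (hA : Aᵀ * A.submatrix σ id = 1) (hC : ∀ i, 0 ∈ C i) (hdual : ∀ i, dualSet (C i) ⊆ C i) :
    dualSet (mpc C A) ⊆ mpc C A := by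
  intro v hv
  refine ⟨fun i t => (A *ᵥ fun j => v (j, t)) (σ i), fun i => ?_, fun jt => ?_⟩
  · exact hσ i ▸ hdual _ (mulVec_mem_dualSet_of_mem_dualSet_mpc hC hv (σ i))
  · obtain ⟨j, t⟩ := jt
    have hvt : (fun j => v (j, t)) = Aᵀ *ᵥ (A.submatrix σ id *ᵥ fun j => v (j, t)) := by
      rw [mulVec_mulVec, hA, one_mulVec]
    exact congrFun hvt j

end MatrixProductCode

open MatrixProductCode in
theorem stmt7 {n : ℕ} (C₁ C₂ : Submodule (ZMod 2) (Fin n → ZMod 2))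
    (h₁ : dualSet (C₁ : Set (Fin n → ZMod 2)) ⊆ (C₁ : Set (Fin n → ZMod 2)))
    (h₂ : dualSet (C₂ : Set (Fin n → ZMod 2)) ⊆ (C₂ : Set (Fin n → ZMod 2))) :
    dualSet (mpc ![(C₁ : Set (Fin n → ZMod 2)), ↑C₁, ↑C₂]
        (!![1,0,1; 1,1,0; 1,1,1] : Matrix (Fin 3) (Fin 3) (ZMod 2))) ⊆
      mpc ![(C₁ : Set (Fin n → ZMod 2)), ↑C₁, ↑C₂]
        (!![1,0,1; 1,1,0; 1,1,1] : Matrix (Fin 3) (Fin 3) (ZMod 2)) := by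
  refine dualSet_mpc_subset (Equiv.swap 0 1) (fun i => ?_) (by decide) (fun i => ?_)
    (fun i => ?_)
  · fin_cases i <;> rfl
  · fin_cases i <;> exact Submodule.zero_mem _
  · fin_cases i
    exacts [h₁, h₁, h₂]
end

section
/- Let C_1, C_2 be linear codes of length n over F_3 with C_1^⊥ ⊆ C_1 and C_2^⊥ ⊆ C_2, and let A be the 2×2 matrix over F_3 with rows (1,1) and (2,1). Then ([C_1, C_2]·A)^⊥ ⊆ [C_1, C_2]·A. -/
theorem stmt8 {n : ℕ} (C₁ C₂ : Submodule (ZMod 3) (Fin n → ZMod 3))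
    (h₁ : dualSet (C₁ : Set (Fin n → ZMod 3)) ⊆ (C₁ : Set (Fin n → ZMod 3)))
    (h₂ : dualSet (C₂ : Set (Fin n → ZMod 3)) ⊆ (C₂ : Set (Fin n → ZMod 3))) :
    dualSet (mpc ![(C₁ : Set (Fin n → ZMod 3)), ↑C₂]
        (!![1,1; 2,1] : Matrix (Fin 2) (Fin 2) (ZMod 3))) ⊆
      mpc ![(C₁ : Set (Fin n → ZMod 3)), ↑C₂]
        (!![1,1; 2,1] : Matrix (Fin 2) (Fin 2) (ZMod 3)) := by
  intro v hv
  set v₀ : Fin n → ZMod 3 := fun t => v (0, t) with hv₀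
  set v₁ : Fin n → ZMod 3 := fun t => v (1, t) with hv₁
  have key : ∀ (c₁ c₂ : Fin n → ZMod 3), c₁ ∈ C₁ → c₂ ∈ C₂ →
      (∑ t, c₁ t * (v₀ t + v₁ t)) + (∑ t, c₂ t * (2 * v₀ t + v₁ t)) = 0 := by
    intro c₁ c₂ m1 m2
    have hx : (fun jt : Fin 2 × Fin n =>
        ∑ i, (!![1,1; 2,1] : Matrix (Fin 2) (Fin 2) (ZMod 3)) i jt.1 * (![c₁, c₂]) i jt.2)
        ∈ mpc ![(C₁ : Set (Fin n → ZMod 3)), ↑C₂] (!![1,1; 2,1]) := by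
      refine ⟨![c₁, c₂], ?_, fun jt => rfl⟩
      intro i; fin_cases i <;> simpa
    have := hv _ hx
    rw [Fintype.sum_prod_type] at this
    rw [Fin.sum_univ_two] at this
    simp only [Fin.sum_univ_two, Matrix.cons_val_zero, Matrix.cons_val_one, Matrix.head_cons,
      Matrix.cons_val', Matrix.empty_val', Matrix.cons_val_fin_one, Matrix.of_apply,
      Matrix.head_fin_const] at this
    have this2 : ∑ t, ((1 * c₁ t + 2 * c₂ t) * v (0, t) + (1 * c₁ t + 1 * c₂ t) * v (1, t)) = 0 := by
      rw [Finset.sum_add_distrib]; exact this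
    rw [← this2, ← Finset.sum_add_distrib]
    refine Finset.sum_congr rfl fun t _ => ?_
    simp only [hv₀, hv₁]
    ring
  have hA : v₀ + v₁ ∈ dualSet (C₁ : Set (Fin n → ZMod 3)) := by
    intro c hc
    have := key c 0 hc (zero_mem C₂)
    simpa using this
  have hB : (fun t => 2 * v₀ t + v₁ t) ∈ dualSet (C₂ : Set (Fin n → ZMod 3)) := by
    intro c hc
    have := key 0 c (zero_mem C₁) hc
    simpa using this
  have hA' : v₀ + v₁ ∈ C₁ := h₁ hA
  have hB' : (fun t => 2 * v₀ t + v₁ t) ∈ C₂ := h₂ hB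
  refine ⟨![(2 : ZMod 3) • (v₀ + v₁), (2 : ZMod 3) • (fun t => 2 * v₀ t + v₁ t)], ?_, ?_⟩
  · intro i; fin_cases i
    · simpa using C₁.smul_mem (2 : ZMod 3) hA'
    · simpa using C₂.smul_mem (2 : ZMod 3) hB'
  · intro jt
    obtain ⟨j, t⟩ := jt
    fin_cases j <;>
    · simp only [Fin.sum_univ_two, Fin.isValue, Fin.mk_zero, Fin.mk_one,
        Matrix.cons_val_zero, Matrix.cons_val_one, Matrix.head_cons,
        Matrix.cons_val', Matrix.empty_val', Matrix.cons_val_fin_one, Matrix.of_apply,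
        Matrix.head_fin_const, Pi.smul_apply, Pi.add_apply, smul_eq_mul, hv₀, hv₁]
      ring_nf
      first
      | (rw [show (10:ZMod 3) = 1 from rfl, show (6:ZMod 3) = 0 from rfl]; ring)
      | (rw [show (6:ZMod 3) = 0 from rfl, show (4:ZMod 3) = 1 from rfl]; ring)
end

section
/- Let m be even and q ≥ 2, and consider exponent vectors α ∈ {0,…,q-1}^m. If every α satisfying Π_{i=1}^m (α_i + 1) < q^m - t also satisfies Π_{i=1}^m (q - α_i) ≥ q^m - t, then t ≥ q^m - q^{m/2}. -/
/-!
The exponent vector with `m / 2` coordinates equal to `q - 1` and the others `0` has both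
`∏ (αᵢ + 1)` and `∏ (q - αᵢ)` equal to `q ^ (m / 2)`, so the hypothesis applied to it forces
`q ^ m - t ≤ q ^ (m / 2)`.
-/

open Finset

section SaturatedExponent

variable {ι : Type*} [DecidableEq ι]

def saturatedExponent (s : Finset ι) (q : ℕ) (i : ι) : ℕ :=
  if i ∈ s then q - 1 else 0

theorem saturatedExponent_le (s : Finset ι) (q : ℕ) (i : ι) :
    saturatedExponent s q i ≤ q - 1 := by
  unfold saturatedExponent
  split <;> omega

theorem prod_saturatedExponent_add_one [Fintype ι] (s : Finset ι) {q : ℕ} (hq : 1 ≤ q) :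
    ∏ i, (saturatedExponent s q i + 1) = q ^ #s := by
  have hfactor : ∀ i, saturatedExponent s q i + 1 = if i ∈ s then q else 1 := by
    intro i
    unfold saturatedExponent
    split <;> omega
  simp only [hfactor, Fintype.prod_ite_mem, prod_const]

theorem prod_sub_saturatedExponent [Fintype ι] (s : Finset ι) {q : ℕ} (hq : 1 ≤ q) :
    ∏ i, (q - saturatedExponent s q i) = q ^ #sᶜ := by
  have hfactor : ∀ i, q - saturatedExponent s q i = if i ∈ sᶜ then q else 1 := by
    intro i
    unfold saturatedExponent
    by_cases hi : i ∈ s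
    · simp only [hi, if_true, mem_compl, not_true_eq_false, if_false]
      omega
    · simp [hi]
  simp only [hfactor, Fintype.prod_ite_mem, prod_const]

end SaturatedExponent

theorem stmt12_general {q m t : ℕ} (hq : 2 ≤ q) (hm : Even m)
    (h : ∀ α : Fin m → ℕ, (∀ i, α i ≤ q - 1) →
      ∏ i, (α i + 1) < q ^ m - t → q ^ m - t ≤ ∏ i, (q - α i)) :
    q ^ m - q ^ (m / 2) ≤ t := by
  obtain ⟨s, -, hs⟩ := exists_subset_card_eq (s := (univ : Finset (Fin m))) (n := m / 2)
    (by simpa using Nat.div_le_self m 2)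
  have hsc : #sᶜ = m / 2 := by
    obtain ⟨k, rfl⟩ := hm
    rw [card_compl, hs, Fintype.card_fin]
    omega
  have hwitness := h (saturatedExponent s q) (saturatedExponent_le s q)
  rw [prod_saturatedExponent_add_one s (by omega), prod_sub_saturatedExponent s (by omega),
    hs, hsc] at hwitness
  have hle : q ^ m - t ≤ q ^ (m / 2) := not_lt.mp fun hlt => (hwitness hlt).not_gt hlt
  omega

theorem stmt12 {q m t : ℕ} (hq : 2 ≤ q) (hm : Even m) (ht : t ≤ q ^ m)
    (h : ∀ α : Fin m → ℕ, (∀ i, α i ≤ q - 1) →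
      ∏ i, (α i + 1) < q ^ m - t → q ^ m - t ≤ ∏ i, (q - α i)) :
    q ^ m - q ^ (m / 2) ≤ t :=
  stmt12_general hq hm h
end

section
/- Let m be even, q ≥ 2, and t ≥ q^m - q^{m/2}. Then every α ∈ {0,…,q-1}^m with Π_{i=1}^m (α_i + 1) < q^m - t satisfies Π_{i=1}^m (q - α_i) ≥ q^m - t; consequently the dual of the hyperbolic code Hyp(t,m) is contained in Hyp(t,m). -/
/-- The hyperbolic code `Hyp(t,m)` over a finite field `F` with `q` elements. -/
def hypCode (F : Type*) [Field F] [Fintype F] (m t : ℕ) :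
    Submodule F ((Fin m → F) → F) :=
  Submodule.span F {v | ∃ α : Fin m → ℕ, (∀ i, α i ≤ Fintype.card F - 1) ∧
    Fintype.card F ^ m - t ≤ ∏ i, (Fintype.card F - α i) ∧
    v = fun P => ∏ i, P i ^ α i}

/-!
Writing `a = ∏ (αᵢ + 1)` and `b = ∏ (q - αᵢ)`, each factor satisfies `(αᵢ + 1)(q - αᵢ) ≥ q`, so
`a b ≥ q ^ m ≥ (q ^ m - t) ^ 2` once `q ^ m - t ≤ q ^ (m / 2)`; hence `a` and `b` cannot both be
smaller than `q ^ m - t`.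

For the dual, write a dual vector as the evaluation of a reduced polynomial `p`. Since
`∑ₓ xᵏ` vanishes for `k < q - 1` and equals `-1` for `k = q - 1`, pairing it with the generator
`X ^ (q - 1 - d)` for a maximal monomial `d` of `p` with `∏ (dᵢ + 1) ≥ q ^ m - t` isolates the
coefficient of `d`, which therefore vanishes. So every monomial of `p` has `∏ (dᵢ + 1) < q ^ m - t`
and, by the first part, is itself a generator of `Hyp(t, m)`.
-/

open Finset MvPolynomial

theorem le_succ_mul_sub {a q : ℕ} (ha : a ≤ q - 1) : q ≤ (a + 1) * (q - a) := by
  rcases Nat.eq_zero_or_pos q with rfl | hq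
  · exact Nat.zero_le _
  · obtain ⟨b, rfl⟩ := Nat.exists_eq_add_of_le (show a ≤ q by omega)
    rw [Nat.add_sub_cancel_left]
    have hb : 1 ≤ b := by omega
    nlinarith

theorem pow_le_prod_succ_mul_prod_sub {ι : Type*} [Fintype ι] {q : ℕ} {α : ι → ℕ}
    (hα : ∀ i, α i ≤ q - 1) :
    q ^ Fintype.card ι ≤ (∏ i, (α i + 1)) * ∏ i, (q - α i) := by
  rw [← prod_mul_distrib, ← card_univ, ← prod_const]
  exact prod_le_prod' fun i _ => le_succ_mul_sub (hα i)

theorem le_prod_sub_of_prod_succ_lt {ι : Type*} [Fintype ι] {q s : ℕ} {α : ι → ℕ}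
    (hs : s * s ≤ q ^ Fintype.card ι) (hα : ∀ i, α i ≤ q - 1) (h : ∏ i, (α i + 1) < s) :
    s ≤ ∏ i, (q - α i) := by
  by_contra! h'
  have := pow_le_prod_succ_mul_prod_sub hα
  have := Nat.mul_lt_mul'' h h'
  omega

theorem FiniteField.sum_pow_card_sub_one {K : Type*} [Field K] [Fintype K] :
    ∑ x : K, x ^ (Fintype.card K - 1) = -1 := by
  classical
  have hq : Fintype.card K - 1 ≠ 0 := by have := Fintype.one_lt_card (α := K); omega
  have hpow : ∀ x : K, x ^ (Fintype.card K - 1) = if x = 0 then 0 else 1 := fun x => by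
    split_ifs with hx
    · rw [hx, zero_pow hq]
    · exact FiniteField.pow_card_sub_one_eq_one x hx
  simp only [hpow, sum_ite, sum_const_zero, zero_add, sum_const, nsmul_eq_mul, mul_one]
  rw [filter_ne', card_erase_of_mem (mem_univ _), card_univ,
    Nat.cast_sub Fintype.card_pos, FiniteField.cast_card_eq_zero, Nat.cast_one, zero_sub]

section Pairing

variable {R σ : Type*} [CommRing R] [Fintype σ]

theorem sum_monomial_mul_eval [Fintype R] [DecidableEq σ] (α : σ → ℕ) (p : MvPolynomial σ R) :
    ∑ x : σ → R, (∏ i, x i ^ α i) * eval x p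
      = ∑ γ ∈ p.support, p.coeff γ * ∏ i, ∑ y : R, y ^ (α i + γ i) := by
  simp_rw [eval_eq', mul_sum, Fintype.prod_sum, pow_add, prod_mul_distrib]
  rw [sum_comm]
  refine sum_congr rfl fun γ _ => ?_
  rw [mul_sum]
  exact sum_congr rfl fun x _ => by ring

theorem eval_mem_span_of_forall_mem_support (p : MvPolynomial σ R) {G : Set ((σ → R) → R)}
    (h : ∀ d ∈ p.support, (fun x : σ → R => ∏ i, x i ^ d i) ∈ G) :
    (fun x => eval x p) ∈ Submodule.span R G := by
  have : (fun x => eval x p) = ∑ d ∈ p.support, p.coeff d • fun x : σ → R => ∏ i, x i ^ d i := by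
    ext x
    simp only [eval_eq', Finset.sum_apply, Pi.smul_apply, smul_eq_mul]
  rw [this]
  exact Submodule.sum_mem _ fun d hd => Submodule.smul_mem _ _ (Submodule.subset_span (h d hd))

end Pairing

section Orthogonality

variable {K σ : Type*} [Field K] [Fintype K] [Fintype σ]

local notation "q" => Fintype.card K

theorem prod_sum_pow_eq_zero_of_not_le {d γ : σ →₀ ℕ} (hd : ∀ i, d i ≤ q - 1) (h : ¬d ≤ γ) :
    ∏ i, ∑ y : K, y ^ (q - 1 - d i + γ i) = 0 := by
  obtain ⟨i, hi⟩ : ∃ i, γ i < d i := by simpa [Finsupp.le_def] using h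
  have hlt : q - 1 - d i + γ i < q - 1 := by have := hd i; omega
  exact prod_eq_zero (mem_univ i) (FiniteField.sum_pow_lt_card_sub_one K _ hlt)

theorem prod_sum_pow_eq_neg_one_pow {d : σ →₀ ℕ} (hd : ∀ i, d i ≤ q - 1) :
    ∏ i, ∑ y : K, y ^ (q - 1 - d i + d i) = (-1) ^ Fintype.card σ := by
  simp_rw [Nat.sub_add_cancel (hd _), FiniteField.sum_pow_card_sub_one, prod_const, card_univ]

theorem notMem_of_mem_support_of_orthogonal [DecidableEq σ] {S : Set (σ →₀ ℕ)}
    (hS : IsUpperSet S) {p : MvPolynomial σ K} (hp : p ∈ restrictDegree σ K (q - 1))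
    (horth : ∀ d ∈ S, (∀ i, d i ≤ q - 1) →
      ∑ x : σ → K, (∏ i, x i ^ (q - 1 - d i)) * eval x p = 0)
    {d : σ →₀ ℕ} (hd : d ∈ p.support) : d ∉ S := by
  classical
  rw [mem_restrictDegree] at hp
  intro hdS
  obtain ⟨d₀, hd₀⟩ := (p.support.filter (· ∈ S)).exists_maximal ⟨d, mem_filter.2 ⟨hd, hdS⟩⟩
  obtain ⟨hd₀p, hd₀S⟩ := mem_filter.1 hd₀.prop
  have hsingle : ∑ γ ∈ p.support, p.coeff γ * ∏ i, ∑ y : K, y ^ (q - 1 - d₀ i + γ i)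
      = p.coeff d₀ * ∏ i, ∑ y : K, y ^ (q - 1 - d₀ i + d₀ i) := by
    refine sum_eq_single_of_mem d₀ hd₀p fun γ hγ hne => ?_
    by_cases hle : d₀ ≤ γ
    · have : γ ∈ p.support.filter (· ∈ S) := mem_filter.2 ⟨hγ, hS hle hd₀S⟩
      exact absurd (hd₀.eq_of_le this hle).symm hne
    · rw [prod_sum_pow_eq_zero_of_not_le (hp d₀ hd₀p) hle, mul_zero]
  have h := horth d₀ hd₀S (hp d₀ hd₀p)
  rw [sum_monomial_mul_eval, hsingle, prod_sum_pow_eq_neg_one_pow (hp d₀ hd₀p)] at h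
  exact mem_support_iff.1 hd₀p ((mul_eq_zero.1 h).resolve_right (pow_ne_zero _ (by simp)))

end Orthogonality

theorem stmt13_general {F : Type*} [Field F] [Fintype F] {m t : ℕ} (hm : Even m)
    (ht : Fintype.card F ^ m - Fintype.card F ^ (m / 2) ≤ t) :
    (∀ α : Fin m → ℕ, (∀ i, α i ≤ Fintype.card F - 1) →
      ∏ i, (α i + 1) < Fintype.card F ^ m - t →
      Fintype.card F ^ m - t ≤ ∏ i, (Fintype.card F - α i)) ∧
    dualSet (hypCode F m t : Set ((Fin m → F) → F)) ⊆
      (hypCode F m t : Set ((Fin m → F) → F)) := by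
  set q := Fintype.card F
  have hs : (q ^ m - t) * (q ^ m - t) ≤ q ^ Fintype.card (Fin m) := by
    have hle : q ^ m - t ≤ q ^ (m / 2) := by omega
    calc (q ^ m - t) * (q ^ m - t) ≤ q ^ (m / 2) * q ^ (m / 2) := Nat.mul_le_mul hle hle
      _ = _ := by rw [← pow_add, Fintype.card_fin, ← two_mul, Nat.two_mul_div_two_of_even hm]
  have hcomb := fun α : Fin m → ℕ => le_prod_sub_of_prod_succ_lt (α := α) hs
  refine ⟨hcomb, fun v hv => ?_⟩
  obtain ⟨p, hp, rfl⟩ : v ∈ (restrictDegree (Fin m) F (q - 1)).map (evalₗ F (Fin m)) := by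
    rw [map_restrict_dom_evalₗ]; trivial
  set S : Set (Fin m →₀ ℕ) := {d | q ^ m - t ≤ ∏ i, (d i + 1)}
  have hS : IsUpperSet S := fun d γ hle hd =>
    hd.trans (prod_le_prod' fun i _ => Nat.add_le_add_right (hle i) 1)
  have horth : ∀ d ∈ S, (∀ i, d i ≤ q - 1) →
      ∑ x : Fin m → F, (∏ i, x i ^ (q - 1 - d i)) * eval x p = 0 := fun d hdS hd => by
    have hq : 0 < q := Fintype.card_pos
    refine hv _ (Submodule.subset_span ⟨fun i => q - 1 - d i, fun i => Nat.sub_le _ _, ?_, rfl⟩)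
    have hsub : ∀ i, q - (q - 1 - d i) = d i + 1 := fun i => by have := hd i; omega
    show q ^ m - t ≤ ∏ i, (q - (q - 1 - d i))
    rwa [prod_congr rfl fun i _ => hsub i]
  have hred := (mem_restrictDegree _ _ _).1 hp
  refine eval_mem_span_of_forall_mem_support p fun d hd =>
    ⟨d, hred d hd, hcomb d (hred d hd) ?_, rfl⟩
  by_contra! hdS
  exact notMem_of_mem_support_of_orthogonal hS hp horth hd hdS

theorem stmt13 {F : Type*} [Field F] [Fintype F] {m t : ℕ} (hm : Even m)
    (ht : Fintype.card F ^ m - Fintype.card F ^ (m / 2) ≤ t)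
    (ht' : t ≤ Fintype.card F ^ m) :
    (∀ α : Fin m → ℕ, (∀ i, α i ≤ Fintype.card F - 1) →
      ∏ i, (α i + 1) < Fintype.card F ^ m - t →
      Fintype.card F ^ m - t ≤ ∏ i, (Fintype.card F - α i)) ∧
    dualSet (hypCode F m t : Set ((Fin m → F) → F)) ⊆
      (hypCode F m t : Set ((Fin m → F) → F)) :=
  stmt13_general hm ht
end

section
/- Let m be odd, q even, and consider α ∈ {0,…,q-1}^m. If every α satisfying Π_{i=1}^m (α_i + 1) < q^m - t also satisfies Π_{i=1}^m (q - α_i) ≥ q^m - t, then t ≥ q^m - q^{(m-1)/2}(q/2 + 1). -/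
lemma prod_wit (k a b c : ℕ) :
    ∏ i ∈ Finset.range (k + (k + 1)), (if i < k then a else if i = k then b else c)
      = a ^ k * (c ^ k * b) := by
  rw [Finset.prod_range_add]
  congr 1
  · calc ∏ i ∈ Finset.range k, (if i < k then a else if i = k then b else c)
        = ∏ _i ∈ Finset.range k, a :=
          Finset.prod_congr rfl (fun i hi => by simp [Finset.mem_range.mp hi])
      _ = a ^ k := by simp
  · rw [Finset.prod_range_succ']
    congr 1
    · calc ∏ i ∈ Finset.range k,
          (if k + (i + 1) < k then a else if k + (i + 1) = k then b else c)
          = ∏ _i ∈ Finset.range k, c := Finset.prod_congr rfl (fun i hi => by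
            have h1 : ¬ (k + (i + 1) < k) := by omega
            have h2 : ¬ (k + (i + 1) = k) := by omega
            simp [h1, h2])
        _ = c ^ k := by simp
    · simp

theorem stmt14 {q m t : ℕ} (hq : 2 ≤ q) (hqe : Even q) (hm : Odd m) (ht : t ≤ q ^ m)
    (h : ∀ α : Fin m → ℕ, (∀ i, α i ≤ q - 1) →
      ∏ i, (α i + 1) < q ^ m - t → q ^ m - t ≤ ∏ i, (q - α i)) :
    q ^ m - q ^ ((m - 1) / 2) * (q / 2 + 1) ≤ t := by
  obtain ⟨k, hk⟩ := hm
  obtain ⟨s, hs⟩ := hqe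
  have hs1 : 1 ≤ s := by omega
  have hq2 : q / 2 = s := by omega
  have hk2 : (m - 1) / 2 = k := by omega
  rw [hk2, hq2]
  by_contra hcon
  push_neg at hcon
  have hqk : 1 ≤ q ^ k := Nat.one_le_pow _ _ (by omega)
  have hlt : t + q ^ k * (s + 1) < q ^ m := by omega
  set g : ℕ → ℕ := fun i => if i < k then q - 1 else if i = k then s else 0 with hg
  set α : Fin m → ℕ := fun i => g i.val with hα
  have hbd : ∀ i, α i ≤ q - 1 := by
    intro i
    simp only [hα, hg]
    split_ifs <;> omega
  have hm2 : m = k + (k + 1) := by omega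
  have hp1 : ∏ i, (α i + 1) = q ^ k * (s + 1) := by
    calc ∏ i, (α i + 1) = ∏ i ∈ Finset.range m, (g i + 1) :=
          Fin.prod_univ_eq_prod_range (fun i => g i + 1) m
      _ = ∏ i ∈ Finset.range (k + (k + 1)),
            (if i < k then q else if i = k then s + 1 else 1) := by
          rw [hm2]
          refine Finset.prod_congr rfl fun i _ => ?_
          simp only [hg]
          split_ifs <;> omega
      _ = q ^ k * (1 ^ k * (s + 1)) := prod_wit k q (s + 1) 1
      _ = q ^ k * (s + 1) := by ring
  have hp2 : ∏ i, (q - α i) = s * q ^ k := by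
    calc ∏ i, (q - α i) = ∏ i ∈ Finset.range m, (q - g i) :=
          Fin.prod_univ_eq_prod_range (fun i => q - g i) m
      _ = ∏ i ∈ Finset.range (k + (k + 1)),
            (if i < k then 1 else if i = k then s else q) := by
          rw [hm2]
          refine Finset.prod_congr rfl fun i _ => ?_
          simp only [hg]
          split_ifs <;> omega
      _ = 1 ^ k * (q ^ k * s) := prod_wit k 1 s q
      _ = s * q ^ k := by ring
  have := h α hbd (by omega)
  rw [hp2] at this
  have : s * q ^ k < q ^ k * (s + 1) := by nlinarith
  omega
end

section
/- Let m and q both be odd, and consider α ∈ {0,…,q-1}^m. If every α satisfying Π_{i=1}^m (α_i + 1) < q^m - t also satisfies Π_{i=1}^m (q - α_i) ≥ q^m - t, then t ≥ q^m - q^{(m-1)/2}·(q+1)/2. -/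
/-!
The witness `α` has `(m-1)/2` coordinates `q-1`, one coordinate `(q-1)/2` and the rest `0`, placed
so that `α i + α (rev i) = q - 1`. Then `q - α i = α (rev i) + 1`, so both products in the
hypothesis equal `P = q^((m-1)/2) * (q+1)/2`. If `t` were smaller than `q^m - P`, the hypothesis
applied to `α` would give `q^m - t ≤ P`, a contradiction.
-/

open Finset

lemma prod_sub_eq_prod_add_one_of_add_rev {n q : ℕ} (hq : 1 ≤ q) (α : Fin n → ℕ)
    (hα : ∀ i, α i + α i.rev = q - 1) :
    ∏ i, (q - α i) = ∏ i, (α i + 1) := by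
  rw [← Equiv.prod_comp Fin.revPerm (fun i => α i + 1)]
  refine prod_congr rfl fun i _ => ?_
  have := hα i
  simp only [Fin.revPerm_apply]
  omega

lemma prod_range_two_mul_add_one_ite (k a b c : ℕ) :
    ∏ j ∈ range (2 * k + 1), (if j < k then a else if j = k then b else c)
      = a ^ k * b * c ^ k := by
  rw [show 2 * k + 1 = k + (k + 1) by ring, prod_range_add, prod_range_succ']
  have hlow : ∏ j ∈ range k, (if j < k then a else if j = k then b else c) = a ^ k := by
    rw [prod_congr rfl fun j hj => if_pos (mem_range.mp hj), prod_const, card_range]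
  have hhigh : ∏ j ∈ range k,
      (if k + (j + 1) < k then a else if k + (j + 1) = k then b else c) = c ^ k := by
    rw [prod_congr rfl fun j _ => by rw [if_neg (by omega), if_neg (by omega)],
      prod_const, card_range]
  simp only [hlow, hhigh, add_zero, lt_irrefl, if_false, if_true]
  ring

def palindromicWitness (q k j : ℕ) : ℕ :=
  if j < k then q - 1 else if j = k then (q - 1) / 2 else 0

lemma palindromicWitness_le (q k j : ℕ) : palindromicWitness q k j ≤ q - 1 := by
  unfold palindromicWitness
  split_ifs <;> omega

lemma palindromicWitness_add_reflect {q k j : ℕ} (hq : Odd q) (hj : j ≤ 2 * k) :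
    palindromicWitness q k j + palindromicWitness q k (2 * k - j) = q - 1 := by
  obtain ⟨r, rfl⟩ := hq
  unfold palindromicWitness
  split_ifs <;> omega

lemma prod_palindromicWitness_add_one {q : ℕ} (hq : 1 ≤ q) (k : ℕ) :
    ∏ i : Fin (2 * k + 1), (palindromicWitness q k i + 1) = q ^ k * ((q + 1) / 2) :=
  calc ∏ i : Fin (2 * k + 1), (palindromicWitness q k i + 1)
      = ∏ j ∈ range (2 * k + 1), (if j < k then q else if j = k then (q + 1) / 2 else 1) := by
        rw [Fin.prod_univ_eq_prod_range (fun j => palindromicWitness q k j + 1)]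
        refine prod_congr rfl fun j _ => ?_
        unfold palindromicWitness
        split_ifs <;> omega
    _ = q ^ k * ((q + 1) / 2) := by rw [prod_range_two_mul_add_one_ite, one_pow, mul_one]

theorem stmt15_general {q m t : ℕ} (hqo : Odd q) (hm : Odd m)
    (h : ∀ α : Fin m → ℕ, (∀ i, α i ≤ q - 1) →
      ∏ i, (α i + 1) < q ^ m - t → q ^ m - t ≤ ∏ i, (q - α i)) :
    q ^ m - q ^ ((m - 1) / 2) * ((q + 1) / 2) ≤ t := by
  obtain ⟨k, rfl⟩ := hm
  rw [show (2 * k + 1 - 1) / 2 = k by omega]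
  set α : Fin (2 * k + 1) → ℕ := fun i => palindromicWitness q k i
  have hprod : ∏ i, (α i + 1) = q ^ k * ((q + 1) / 2) :=
    prod_palindromicWitness_add_one hqo.pos k
  have hdual : ∏ i, (q - α i) = ∏ i, (α i + 1) :=
    prod_sub_eq_prod_add_one_of_add_rev hqo.pos α fun i => by
      simpa only [α, Fin.val_rev, show 2 * k + 1 - (i + 1) = 2 * k - i by omega] using
        palindromicWitness_add_reflect hqo (show (i : ℕ) ≤ 2 * k by omega)
  by_contra! hlt
  have := h α (fun i => palindromicWitness_le q k i) (by omega)
  omega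

theorem stmt15 {q m t : ℕ} (hq : 3 ≤ q) (hqo : Odd q) (hm : Odd m) (ht : t ≤ q ^ m)
    (h : ∀ α : Fin m → ℕ, (∀ i, α i ≤ q - 1) →
      ∏ i, (α i + 1) < q ^ m - t → q ^ m - t ≤ ∏ i, (q - α i)) :
    q ^ m - q ^ ((m - 1) / 2) * ((q + 1) / 2) ≤ t :=
  stmt15_general hqo hm h
end

section
/- Let C ⊆ F_{p^r}^n be a linear code and set C^σ = C ∩ F_{p^s}^n for s | r. Then the Euclidean dual of C^σ within F_{p^s}^n satisfies (C ∩ F_{p^s}^n)^⊥ = tr(C^⊥), where tr is the trace from F_{p^r} to F_{p^s} applied componentwise and C^⊥ is the Euclidean dual of C in F_{p^r}^n (Delsarte's theorem). -/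
open LinearMap Module

section dot

variable (E : Type*) [Field E] (n : ℕ)

/-- The dot product bilinear form on `Fin n → E`. -/
def dotForm : LinearMap.BilinForm E (Fin n → E) :=
  LinearMap.mk₂ E (fun x y => ∑ j, x j * y j)
    (fun x x' y => by simp [add_mul, Finset.sum_add_distrib])
    (fun a x y => by simp [Finset.mul_sum, mul_assoc])
    (fun x y y' => by simp [mul_add, Finset.sum_add_distrib])
    (fun a x y => by simp [Finset.mul_sum, mul_left_comm])

variable {E n}

@[simp] lemma dotForm_apply (x y : Fin n → E) : dotForm E n x y = ∑ j, x j * y j := rfl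

lemma dotForm_isRefl : (dotForm E n).IsRefl := by
  intro x y h
  simpa [mul_comm] using h

lemma dotForm_nondeg : (dotForm E n).Nondegenerate := by
  refine (LinearMap.IsRefl.nondegenerate_iff_separatingLeft (B := dotForm E n) dotForm_isRefl).2 ?_
  intro x hx
  funext j
  simpa [Pi.single_apply, Finset.sum_ite_eq'] using hx (Pi.single j 1)

end dot

section tr

variable (K F : Type*) [Field K] [Field F] [Algebra K F] (n : ℕ)

/-- The trace bilinear form on `Fin n → F` over `K`. -/
noncomputable def trForm : LinearMap.BilinForm K (Fin n → F) :=
  LinearMap.mk₂ K (fun x y => Algebra.trace K F (∑ j, x j * y j))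
    (fun x x' y => by simp [add_mul, Finset.sum_add_distrib])
    (fun a x y => by
      simp [smul_mul_assoc, ← Finset.smul_sum])
    (fun x y y' => by simp [mul_add, Finset.sum_add_distrib])
    (fun a x y => by
      simp [mul_smul_comm, ← Finset.smul_sum])

variable {K F n}

@[simp] lemma trForm_apply (x y : Fin n → F) :
    trForm K F n x y = Algebra.trace K F (∑ j, x j * y j) := rfl

lemma trForm_isRefl : (trForm K F n).IsRefl := by
  intro x y h
  simpa [mul_comm] using h

lemma trForm_nondeg [FiniteDimensional K F] [Algebra.IsSeparable K F] :
    (trForm K F n).Nondegenerate := by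
  refine (LinearMap.IsRefl.nondegenerate_iff_separatingLeft (B := trForm K F n) trForm_isRefl).2 ?_
  intro x hx
  funext j
  refine (traceForm_nondegenerate K F).1 (x j) (fun c => ?_)
  simpa [Pi.single_apply, Finset.sum_ite_eq', Algebra.traceForm_apply] using hx (Pi.single j c)

end tr
set_option maxHeartbeats 1000000 in
theorem stmt18 {p r s n : ℕ} (hp : p.Prime) (hs : 0 < s) (hsr : s ∣ r)
    {K F : Type*} [Field K] [Field F] [Fintype K] [Fintype F] [Algebra K F]
    (hK : Fintype.card K = p ^ s) (hF : Fintype.card F = p ^ r)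
    (C : Submodule F (Fin n → F)) :
    {w : Fin n → K | ∀ v : Fin n → K,
        (fun j => algebraMap K F (v j)) ∈ C → ∑ j, v j * w j = 0} =
      {w : Fin n → K | ∃ c : Fin n → F, (∀ v ∈ C, ∑ j, v j * c j = 0) ∧
        w = fun j => Algebra.trace K F (c j)} := by
  classical
  haveI : Algebra.IsAlgebraic K F := Algebra.IsAlgebraic.of_finite K F
  set D : Submodule F (Fin n → F) := (dotForm F n).orthogonal C with hDdef
  let trm : (Fin n → F) →ₗ[K] (Fin n → K) :=
    LinearMap.pi fun j => (Algebra.trace K F).comp (LinearMap.proj j)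
  have htrm : ∀ (c : Fin n → F), trm c = fun j => Algebra.trace K F (c j) := fun c => rfl
  set T : Submodule K (Fin n → K) := (D.restrictScalars K).map trm with hTdef
  have hDmem : ∀ c : Fin n → F, c ∈ D ↔ ∀ v ∈ C, ∑ j, v j * c j = 0 := by
    intro c
    rw [hDdef, LinearMap.BilinForm.mem_orthogonal_iff]
    simp only [LinearMap.BilinForm.isOrtho_def, dotForm_apply]
  ext w
  simp only [Set.mem_setOf_eq]
  constructor
  · -- hard direction
    intro hw
    -- the trace-form orthogonal of D equals C (restricted to K)
    set S : Submodule K (Fin n → F) := (trForm K F n).orthogonal (D.restrictScalars K) with hSdef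
    have hle : C.restrictScalars K ≤ S := by
      intro x hx
      rw [hSdef, LinearMap.BilinForm.mem_orthogonal_iff]
      intro d hd
      have h0 : ∑ j, x j * d j = 0 := (hDmem d).1 hd x hx
      show trForm K F n d x = 0
      rw [trForm_apply]
      have : ∑ j, d j * x j = 0 := by
        rw [Finset.sum_congr rfl fun j _ => mul_comm (d j) (x j)]
        exact h0
      rw [this, map_zero]
    have hCn : finrank F ↥C ≤ n := by
      simpa [Module.finrank_fin_fun] using Submodule.finrank_le C
    have h1 : finrank F ↥D = n - finrank F ↥C := by
      rw [hDdef, LinearMap.BilinForm.finrank_orthogonal dotForm_nondeg,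
        Module.finrank_fin_fun]
    have hCres : finrank K ↥(C.restrictScalars K) = finrank K F * finrank F ↥C := by
      rw [← Module.finrank_mul_finrank K F ↥(C.restrictScalars K)]
      congr 1
    have hSfr : finrank K ↥S = finrank K F * finrank F ↥C := by
      rw [hSdef, LinearMap.BilinForm.finrank_orthogonal trForm_nondeg]
      have e1 : finrank K (Fin n → F) = finrank K F * n := by
        rw [← Module.finrank_mul_finrank K F (Fin n → F), Module.finrank_fin_fun]
      have e2 : finrank K ↥(D.restrictScalars K) = finrank K F * finrank F ↥D := by
        rw [← Module.finrank_mul_finrank K F ↥(D.restrictScalars K)]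
        congr 1
      rw [e1, e2, h1]
      set d := finrank K F
      set k := finrank F ↥C
      calc d * n - d * (n - k) = (d * (n - k) + d * k) - d * (n - k) := by
            rw [← Nat.mul_add, Nat.sub_add_cancel hCn]
        _ = d * k := Nat.add_sub_cancel_left _ _
    have hS : S = C.restrictScalars K :=
      (Submodule.eq_of_le_of_finrank_le hle (le_of_eq (hSfr.trans hCres.symm))).symm
    -- double orthogonal for the dot form over K
    have hT : (dotForm K n).orthogonal ((dotForm K n).orthogonal T) = T :=
      LinearMap.BilinForm.orthogonal_orthogonal dotForm_nondeg dotForm_isRefl T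
    have hwT : w ∈ T := by
      rw [← hT, LinearMap.BilinForm.mem_orthogonal_iff]
      intro v hv
      have hιv : (fun j => algebraMap K F (v j)) ∈ C := by
        have hmem : (fun j => algebraMap K F (v j)) ∈ S := by
          rw [hSdef, LinearMap.BilinForm.mem_orthogonal_iff]
          intro d hd
          show trForm K F n d (fun j => algebraMap K F (v j)) = 0
          have ht : trm d ∈ T := Submodule.mem_map_of_mem hd
          have h0 : dotForm K n (trm d) v = 0 :=
            LinearMap.BilinForm.mem_orthogonal_iff.1 hv (trm d) ht
          have hstep : (∑ j, Algebra.trace K F (d j * algebraMap K F (v j))) =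
              ∑ j, Algebra.trace K F (d j) * v j :=
            Finset.sum_congr rfl fun j _ => by
              rw [mul_comm, ← Algebra.smul_def, map_smul, smul_eq_mul, mul_comm]
          rw [trForm_apply, map_sum, hstep]
          simpa [htrm] using h0
        rw [hS] at hmem
        exact hmem
      show dotForm K n v w = 0
      exact hw v hιv
    obtain ⟨c, hc, hcw⟩ := hwT
    exact ⟨c, (hDmem c).1 hc, by rw [← hcw]; rfl⟩
  · rintro ⟨c, hc, rfl⟩ v hv
    have hcD : ∑ j, algebraMap K F (v j) * c j = 0 :=
      (hDmem c).2 hc (fun j => algebraMap K F (v j)) hv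
    calc ∑ j, v j * Algebra.trace K F (c j)
        = Algebra.trace K F (∑ j, algebraMap K F (v j) * c j) := by
          rw [map_sum]
          exact Finset.sum_congr rfl fun j _ => by
            rw [← Algebra.smul_def, map_smul, smul_eq_mul]
      _ = 0 := by rw [hcD, map_zero]
end
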